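/- Fix 0 < p < 1 and let μ be a finite even Borel measure on ℝⁿ, not supported on any hyperplane. Let ψ : ℝⁿ → [0,∞] be an even lower semi-continuous convex function with ψ(0) = 0 and write φ = ψ*. Then ∫ ψ^p dμ ≥ c_μ (∫ e^{-φ})^{p/n} - C_μ, where c_μ, C_μ > 0 depend only on μ, p, n and not on ψ. -/

import Mathlib

open MeasureTheory Filter Topology Set
open scoped ENNReal NNReal

noncomputable section

abbrev Euc (n : ℕ) := EuclideanSpace ℝ (Fin n)

variable {n : ℕ}

/-- Legendre transform of an extended-real-valued function. -/
def legendre (ψ : Euc n → EReal) (x : Euc n) : EReal :=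
  ⨆ y, ((inner ℝ x y : ℝ) : EReal) - ψ y

/-- Log-concavity. -/
def IsLogConcave (f : Euc n → ℝ) : Prop :=
  (∀ x, 0 ≤ f x) ∧ ∀ x y : Euc n, ∀ l : ℝ, 0 ≤ l → l ≤ 1 →
    f x ^ (1 - l) * f y ^ l ≤ f ((1 - l) • x + l • y)

/-- `- log f`, with value `⊤` where `f` vanishes. -/
def negLog (f : Euc n → ℝ) (x : Euc n) : EReal :=
  if f x = 0 then ⊤ else ((- Real.log (f x) : ℝ) : EReal)

/-- The support function `h_f = (-log f)^*`. -/
def suppFn (f : Euc n → ℝ) : Euc n → EReal := legendre (negLog f)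

/-- The gradient `∇φ` of `φ = - log f`. -/
def negLogGrad (f : Euc n → ℝ) (x : Euc n) : Euc n :=
  gradient (fun y => - Real.log (f y)) x

/-- The measure `f(x) dx`. -/
def fMeasure (f : Euc n → ℝ) : Measure (Euc n) :=
  volume.withDensity fun x => ENNReal.ofReal (f x)

/-- Positive part of an extended real, as an element of `[0,∞]`. -/
def posPartE (a : EReal) : ℝ≥0∞ := if a = ⊤ then ⊤ else ENNReal.ofReal a.toReal

/-- `∫ ρ dS_f = ∫ ρ(∇φ(x)) f(x) dx` as an extended real number. -/
def SfInt (f : Euc n → ℝ) (ρ : Euc n → EReal) : EReal :=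
  ((∫⁻ x, posPartE (ρ (negLogGrad f x)) ∂(fMeasure f) : ℝ≥0∞) : EReal)
    - ((∫⁻ x, posPartE (-(ρ (negLogGrad f x))) ∂(fMeasure f) : ℝ≥0∞) : EReal)

/-- The Asplund sum (sup-convolution) of two log-concave functions. -/
def asplund (f g : Euc n → ℝ) (x : Euc n) : ℝ := ⨆ y, f y * g (x - y)

/-- Dilation `(t·g)(x) = g(x/t)^t`. -/
def dil (t : ℝ) (g : Euc n → ℝ) (x : Euc n) : ℝ := g (t⁻¹ • x) ^ t

/-- Difference quotient of `t ↦ ∫ f ⋆ (t·g)` at `0`, as an extended real. -/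
def deltaQuot (f g : Euc n → ℝ) (t : ℝ) : EReal :=
  (((∫⁻ x, ENNReal.ofReal (asplund f (dil t g) x) : ℝ≥0∞) : EReal)
    - ((∫⁻ x, ENNReal.ofReal (f x) : ℝ≥0∞) : EReal)) * ((t⁻¹ : ℝ) : EReal)

/-- Essential continuity of a log-concave function. -/
def EssCont (f : Euc n → ℝ) : Prop :=
  μH[(n : ℝ) - 1] {x : Euc n | ¬ ContinuousAt f x} = 0

/-- `e^{-a}` for an extended real `a`, valued in `[0,∞]`. -/
def expNeg (a : EReal) : ℝ≥0∞ :=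
  if a = ⊤ then 0 else if a = ⊥ then ⊤ else ENNReal.ofReal (Real.exp (- a.toReal))

/-- Convexity for extended-real-valued functions. -/
def ERealConvex {n : ℕ} (ψ : Euc n → EReal) : Prop :=
  ∀ x y : Euc n, ∀ a b : ℝ, 0 ≤ a → 0 ≤ b → a + b = 1 →
    ψ (a • x + b • y) ≤ (a : EReal) * ψ x + (b : EReal) * ψ y

/-!
Evenness of `ψ` upgrades Fenchel–Young to `|⟪x, y⟫| ≤ ψ y + ψ* x`, and `t ↦ t ^ p` is subadditive
for `p ≤ 1`; integrating in `y` gives `m ‖x‖ ^ p ≤ ∫ ψ ^ p dμ + μ(ℝⁿ) (ψ* x) ^ p`, where `m > 0` is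
the minimum over the unit sphere of `θ ↦ ∫ min (|⟪θ, y⟫| ^ p) 1 dμ`, positive because `μ` charges
no hyperplane. Hence `ψ* x ≥ κ ‖x‖` outside the ball of radius `r` with `m r ^ p = 2 ∫ ψ ^ p dμ`,
so `∫ e^{-ψ*} ≤ |B_r| + ∫ e^{-κ ‖x‖}`, and raising to the power `p / n ≤ 1` turns `r ^ n` into
`r ^ p`, which is linear in `∫ ψ ^ p dμ`.
-/

section Moment

variable {E : Type*} [NormedAddCommGroup E] [InnerProductSpace ℝ E] [MeasurableSpace E]
  [BorelSpace E] {μ : Measure E} {p : ℝ}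

variable (μ p) in
def truncMoment (θ : E) : ℝ := ∫ y, min (|inner ℝ θ y| ^ p) 1 ∂μ

lemma norm_min_rpow_one_le (t : ℝ) : ‖min (|t| ^ p) 1‖ ≤ 1 := by
  rw [Real.norm_of_nonneg (le_min (by positivity) zero_le_one)]
  exact min_le_right _ _

lemma integrable_min_abs_inner_rpow [IsFiniteMeasure μ] (hp : 0 ≤ p) (θ : E) :
    Integrable (fun y => min (|inner ℝ θ y| ^ p) 1) μ :=
  (integrable_const (1 : ℝ)).mono' (by fun_prop (disch := exact hp))
    (ae_of_all _ fun _ => norm_min_rpow_one_le _)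

lemma continuous_truncMoment [IsFiniteMeasure μ] (hp : 0 ≤ p) :
    Continuous (truncMoment μ p : E → ℝ) :=
  continuous_of_dominated (fun _ => by fun_prop (disch := exact hp))
    (fun _ => ae_of_all _ fun _ => norm_min_rpow_one_le _) (integrable_const 1)
    (ae_of_all _ fun _ => by fun_prop (disch := exact hp))

lemma truncMoment_pos [IsFiniteMeasure μ] (hp : 0 < p)
    (hsupp : ∀ θ : E, θ ≠ 0 → μ {y | inner ℝ θ y ≠ 0} ≠ 0) {θ : E} (hθ : θ ≠ 0) :
    0 < truncMoment μ p θ := by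
  rw [truncMoment, integral_pos_iff_support_of_nonneg (fun _ => by positivity)
    (integrable_min_abs_inner_rpow hp.le θ)]
  convert pos_iff_ne_zero.mpr (hsupp θ hθ) using 3
  ext y
  by_cases h : inner ℝ θ y = 0
  · simp [h, hp.ne']
  · have : 0 < min (|inner ℝ θ y| ^ p) 1 := lt_min (by positivity) one_pos
    simp [h, this.ne']

lemma exists_pos_mul_norm_rpow_le_lintegral [FiniteDimensional ℝ E] [Nontrivial E]
    [IsFiniteMeasure μ] (hp : 0 < p) (hsupp : ∀ θ : E, θ ≠ 0 → μ {y | inner ℝ θ y ≠ 0} ≠ 0) :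
    ∃ m > 0, ∀ x : E,
      ENNReal.ofReal (m * ‖x‖ ^ p) ≤ ∫⁻ y, ENNReal.ofReal (|inner ℝ x y| ^ p) ∂μ := by
  obtain ⟨θ₀, hθ₀, hmin⟩ := (isCompact_sphere (0 : E) 1).exists_isMinOn
    (NormedSpace.sphere_nonempty.mpr zero_le_one)
    (continuous_truncMoment (μ := μ) hp.le).continuousOn
  refine ⟨truncMoment μ p θ₀, truncMoment_pos hp hsupp (ne_zero_of_mem_unit_sphere ⟨θ₀, hθ₀⟩),
    fun x => ?_⟩
  rcases eq_or_ne x 0 with rfl | hx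
  · simp [Real.zero_rpow hp.ne']
  set θ := ‖x‖⁻¹ • x
  have hθ : θ ∈ Metric.sphere (0 : E) 1 := by
    simp [θ, norm_smul, hx]
  have hscale : ∀ y, ‖x‖ ^ p * min (|inner ℝ θ y| ^ p) 1 ≤ |inner ℝ x y| ^ p := fun y =>
    calc ‖x‖ ^ p * min (|inner ℝ θ y| ^ p) 1 ≤ ‖x‖ ^ p * |inner ℝ θ y| ^ p := by
          gcongr; exact min_le_left _ _
      _ = |inner ℝ x y| ^ p := by
          rw [← Real.mul_rpow (norm_nonneg x) (abs_nonneg _), real_inner_smul_left, abs_mul,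
            abs_inv, abs_norm, mul_inv_cancel_left₀ (norm_ne_zero_iff.mpr hx)]
  calc ENNReal.ofReal (truncMoment μ p θ₀ * ‖x‖ ^ p)
      ≤ ENNReal.ofReal (‖x‖ ^ p * truncMoment μ p θ) := by
        rw [mul_comm]; gcongr; exact hmin hθ
    _ = ∫⁻ y, ENNReal.ofReal (‖x‖ ^ p * min (|inner ℝ θ y| ^ p) 1) ∂μ := by
        rw [truncMoment, ← integral_const_mul, ofReal_integral_eq_lintegral_ofReal
          ((integrable_min_abs_inner_rpow hp.le θ).const_mul _)
          (ae_of_all _ fun _ => by positivity)]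
    _ ≤ ∫⁻ y, ENNReal.ofReal (|inner ℝ x y| ^ p) ∂μ :=
        lintegral_mono fun y => ENNReal.ofReal_le_ofReal (hscale y)

end Moment

section Legendre

variable {ψ : Euc n → EReal}

lemma posPartE_eq_toENNReal : posPartE = EReal.toENNReal := rfl

lemma legendre_nonneg (h0 : ψ 0 ≤ 0) (x : Euc n) : 0 ≤ legendre ψ x :=
  le_iSup_of_le 0 (by simpa using h0)

lemma inner_le_add_legendre {x y : Euc n} (hy : ψ y ≠ ⊥) (hx : legendre ψ x ≠ ⊥) :
    (inner ℝ x y : EReal) ≤ ψ y + legendre ψ x := by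
  rw [add_comm, ← EReal.sub_le_iff_le_add (.inl hy) (.inr hx)]
  exact le_iSup (fun y => (inner ℝ x y : EReal) - ψ y) y

lemma abs_inner_le_add_legendre (hsym : ∀ x, ψ (-x) = ψ x) {x y : Euc n} (hy : ψ y ≠ ⊥)
    (hx : legendre ψ x ≠ ⊥) : ((|inner ℝ x y| : ℝ) : EReal) ≤ ψ y + legendre ψ x := by
  rcases abs_choice (inner ℝ x y) with h | h
  · rw [h]; exact inner_le_add_legendre hy hx
  · rw [h, ← inner_neg_right (𝕜 := ℝ), ← hsym y]
    exact inner_le_add_legendre (by rwa [hsym]) hx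

variable {p : ℝ}

lemma ofReal_abs_inner_rpow_le (hp0 : 0 ≤ p) (hp1 : p ≤ 1) (hsym : ∀ x, ψ (-x) = ψ x)
    (hpos : ∀ x, 0 ≤ ψ x) (h0 : ψ 0 ≤ 0) (x y : Euc n) :
    ENNReal.ofReal (|inner ℝ x y| ^ p) ≤ (ψ y).toENNReal ^ p + (legendre ψ x).toENNReal ^ p := by
  have hL := legendre_nonneg h0 x
  calc ENNReal.ofReal (|inner ℝ x y| ^ p) = ENNReal.ofReal |inner ℝ x y| ^ p :=
        (ENNReal.ofReal_rpow_of_nonneg (abs_nonneg _) hp0).symm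
    _ ≤ ((ψ y).toENNReal + (legendre ψ x).toENNReal) ^ p := by
        rw [← EReal.toENNReal_add (hpos y) hL, ← EReal.real_coe_toENNReal]
        gcongr
        exact EReal.toENNReal_le_toENNReal <| abs_inner_le_add_legendre hsym
          (ne_bot_of_le_ne_bot EReal.zero_ne_bot (hpos y))
          (ne_bot_of_le_ne_bot EReal.zero_ne_bot hL)
    _ ≤ (ψ y).toENNReal ^ p + (legendre ψ x).toENNReal ^ p :=
        ENNReal.rpow_add_le_add_rpow _ _ hp0 hp1

lemma lintegral_abs_inner_rpow_le (μ : Measure (Euc n)) (hp0 : 0 ≤ p) (hp1 : p ≤ 1)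
    (hsym : ∀ x, ψ (-x) = ψ x) (hpos : ∀ x, 0 ≤ ψ x) (h0 : ψ 0 ≤ 0) (x : Euc n) :
    ∫⁻ y, ENNReal.ofReal (|inner ℝ x y| ^ p) ∂μ
      ≤ ∫⁻ y, (ψ y).toENNReal ^ p ∂μ + μ univ * (legendre ψ x).toENNReal ^ p :=
  calc ∫⁻ y, ENNReal.ofReal (|inner ℝ x y| ^ p) ∂μ
      ≤ ∫⁻ y, ((ψ y).toENNReal ^ p + (legendre ψ x).toENNReal ^ p) ∂μ :=
        lintegral_mono fun y => ofReal_abs_inner_rpow_le hp0 hp1 hsym hpos h0 x y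
    _ = ∫⁻ y, (ψ y).toENNReal ^ p ∂μ + μ univ * (legendre ψ x).toENNReal ^ p := by
        rw [lintegral_add_right _ measurable_const, lintegral_const, mul_comm]

end Legendre

section Tail

variable {p : ℝ}

lemma ENNReal.ofReal_two_mul (x : ℝ) : ENNReal.ofReal (2 * x) = 2 * ENNReal.ofReal x := by
  rw [ENNReal.ofReal_mul zero_le_two, ENNReal.ofReal_ofNat]

lemma ENNReal.le_two_mul_of_le_add {a b c : ℝ≥0∞} (ha : a ≠ ⊤) (hab : a ≤ b + c)
    (hb : 2 * b ≤ a) : a ≤ 2 * c := by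
  refine ENNReal.le_of_add_le_add_left ha ?_
  calc a + a = 2 * a := (two_mul a).symm
    _ ≤ 2 * b + 2 * c := by rw [← mul_add]; gcongr
    _ ≤ a + 2 * c := by gcongr

lemma exists_linear_growth_legendre [Nontrivial (Euc n)] (μ : Measure (Euc n))
    [IsFiniteMeasure μ] (hp0 : 0 < p) (hp1 : p ≤ 1)
    (hsupp : ∀ θ : Euc n, θ ≠ 0 → μ {y | inner ℝ θ y ≠ 0} ≠ 0) :
    ∃ m > 0, ∃ κ > 0, ∀ ψ : Euc n → EReal, (∀ x, ψ (-x) = ψ x) → (∀ x, 0 ≤ ψ x) → ψ 0 ≤ 0 →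
      ∀ x, 2 * ∫⁻ y, (ψ y).toENNReal ^ p ∂μ ≤ ENNReal.ofReal (m * ‖x‖ ^ p) →
        ((κ * ‖x‖ : ℝ) : EReal) ≤ legendre ψ x := by
  obtain ⟨m, hm, hmoment⟩ := exists_pos_mul_norm_rpow_le_lintegral hp0 hsupp
  obtain ⟨θ, hθ⟩ := exists_ne (0 : Euc n)
  have hμ : μ univ ≠ 0 := fun h => hsupp θ hθ (measure_mono_null (subset_univ _) h)
  set M := (μ univ).toReal
  have hM : 0 < M := ENNReal.toReal_pos hμ (measure_ne_top μ _)
  refine ⟨m, hm, (m / (2 * M)) ^ p⁻¹, by positivity, fun ψ hsym hpos h0 x hx => ?_⟩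
  suffices h : ENNReal.ofReal ((m / (2 * M)) ^ p⁻¹ * ‖x‖) ≤ (legendre ψ x).toENNReal by
    rw [← EReal.coe_toENNReal (legendre_nonneg h0 x)]
    exact (EReal.coe_le_coe_iff.mpr (le_max_left _ 0)).trans_eq EReal.coe_ennreal_ofReal.symm
      |>.trans (EReal.coe_ennreal_le_coe_ennreal_iff.mpr h)
  have hgrowth : ENNReal.ofReal (m * ‖x‖ ^ p) ≤ 2 * (μ univ * (legendre ψ x).toENNReal ^ p) :=
    ENNReal.le_two_mul_of_le_add ENNReal.ofReal_ne_top
      ((hmoment x).trans (lintegral_abs_inner_rpow_le μ hp0.le hp1 hsym hpos h0 x)) hx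
  have hκ : ENNReal.ofReal ((m / (2 * M)) ^ p⁻¹ * ‖x‖) ^ p * (2 * μ univ)
      = ENNReal.ofReal (m * ‖x‖ ^ p) := by
    rw [ENNReal.ofReal_rpow_of_nonneg (by positivity) hp0.le, Real.mul_rpow (by positivity)
      (norm_nonneg x), Real.rpow_inv_rpow (by positivity) hp0.ne', ← ENNReal.ofReal_toReal
      (measure_ne_top μ univ), ← ENNReal.ofReal_two_mul,
      ← ENNReal.ofReal_mul (by positivity)]
    congr 1
    simp only [M] at hM ⊢
    field_simp
  rw [← ENNReal.rpow_le_rpow_iff hp0, ← ENNReal.mul_le_mul_iff_left (c := 2 * μ univ)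
    (by simp [hμ]) (ENNReal.mul_ne_top (by simp) (measure_ne_top μ _)), hκ]
  rwa [mul_comm _ (2 * μ univ), mul_assoc]

end Tail

section Integral

lemma expNeg_le_ofReal_exp_neg {a : EReal} {t : ℝ} (h : (t : EReal) ≤ a) :
    expNeg a ≤ ENNReal.ofReal (Real.exp (-t)) := by
  unfold expNeg
  split_ifs with htop hbot
  · exact zero_le
  · exact absurd (hbot ▸ h) (by simp)
  · gcongr
    simpa using EReal.toReal_le_toReal h (EReal.coe_ne_bot t) htop

lemma expNeg_le_one {a : EReal} (ha : 0 ≤ a) : expNeg a ≤ 1 := by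
  simpa using expNeg_le_ofReal_exp_neg (t := 0) (by simpa using ha)

lemma lintegral_le_measure_add_lintegral {α : Type*} [MeasurableSpace α] {μ : Measure α}
    {s : Set α} (hs : MeasurableSet s) {f g : α → ℝ≥0∞} (hfs : ∀ x ∈ s, f x ≤ 1)
    (hfg : ∀ x ∉ s, f x ≤ g x) : ∫⁻ x, f x ∂μ ≤ μ s + ∫⁻ x, g x ∂μ :=
  calc ∫⁻ x, f x ∂μ ≤ ∫⁻ x, (s.indicator 1 x + g x) ∂μ := by
        refine lintegral_mono fun x => ?_
        by_cases hx : x ∈ s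
        · simpa [hx] using le_add_right (hfs x hx)
        · simpa [hx] using hfg x hx
    _ = μ s + ∫⁻ x, g x ∂μ := by
        rw [lintegral_add_left (measurable_one.indicator hs), lintegral_indicator_one hs]

variable {E : Type*} [NormedAddCommGroup E] [MeasurableSpace E]

lemma lintegral_expNeg_le_measure_ball_add [OpensMeasurableSpace E] (μ : Measure E)
    {φ : E → EReal} (hφ : ∀ x, 0 ≤ φ x) {κ r : ℝ}
    (hgrowth : ∀ x, r ≤ ‖x‖ → ((κ * ‖x‖ : ℝ) : EReal) ≤ φ x) :
    ∫⁻ x, expNeg (φ x) ∂μ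
      ≤ μ (Metric.ball 0 r) + ∫⁻ x, ENNReal.ofReal (Real.exp (-(κ * ‖x‖))) ∂μ :=
  lintegral_le_measure_add_lintegral measurableSet_ball (fun x _ => expNeg_le_one (hφ x))
    fun x hx => expNeg_le_ofReal_exp_neg (hgrowth x (by simpa using hx))

variable [NormedSpace ℝ E] [FiniteDimensional ℝ E] [BorelSpace E]

lemma integrable_exp_neg_mul_norm (μ : Measure E) [μ.IsAddHaarMeasure] {κ : ℝ} (hκ : 0 < κ) :
    Integrable (fun x => Real.exp (-(κ * ‖x‖))) μ := by
  have hint : Integrable (fun x : E => Real.exp (-‖x‖)) μ := by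
    -- otherwise the Gamma-function formula for the volume of the unit ball would give `0`
    by_contra h
    have hball := measure_unitBall_eq_integral_div_gamma μ one_pos
    simp only [Real.rpow_one, integral_undef h, zero_div, ENNReal.ofReal_zero] at hball
    exact (Metric.measure_ball_pos μ (0 : E) one_pos).ne' hball
  simpa [norm_smul, abs_of_pos hκ] using
    (integrable_comp_smul_iff μ (fun x : E => Real.exp (-‖x‖)) hκ.ne').mpr hint

end Integral

lemma ereal_inv_mul_sub_le_of_le_mul_add {a b : ℝ≥0∞} {K B : ℝ≥0} (h : a ≤ K * b + B) :
    ((((K + 1)⁻¹ : ℝ≥0) : ℝ) : EReal) * a - ((B + 1 : ℝ≥0) : ℝ) ≤ b := by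
  refine EReal.sub_le_of_le_add ?_
  rw [← EReal.coe_nnreal_eq_coe_real, ← EReal.coe_nnreal_eq_coe_real, ← EReal.coe_ennreal_mul,
    ← EReal.coe_ennreal_add, EReal.coe_ennreal_le_coe_ennreal_iff]
  have hK : ((K + 1)⁻¹ : ℝ≥0) * K ≤ 1 := by
    rw [inv_mul_le_one₀ (by positivity)]; exact le_add_of_nonneg_right zero_le_one
  have hK' : ((K + 1)⁻¹ : ℝ≥0) ≤ 1 := inv_le_one_of_one_le₀ le_add_self
  calc (((K + 1)⁻¹ : ℝ≥0) : ℝ≥0∞) * a ≤ ((K + 1)⁻¹ : ℝ≥0) * (K * b + B) := by gcongr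
    _ = (((K + 1)⁻¹ * K : ℝ≥0) : ℝ≥0∞) * b + (((K + 1)⁻¹ * B : ℝ≥0) : ℝ≥0∞) := by
        push_cast; ring
    _ ≤ 1 * b + ((1 * B : ℝ≥0) : ℝ≥0∞) := by gcongr; exact_mod_cast hK
    _ ≤ b + ((B + 1 : ℝ≥0) : ℝ≥0∞) := by push_cast; rw [one_mul, one_mul]; gcongr; exact le_self_add

lemma ENNReal.rpow_div_le_of_le_ofReal_pow_mul_add {a V A : ℝ≥0∞} {r p : ℝ} {n : ℕ}
    (hr : 0 ≤ r) (hp0 : 0 < p) (hpn : p ≤ n) (h : a ≤ ENNReal.ofReal (r ^ n) * V + A) :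
    a ^ (p / n) ≤ ENNReal.ofReal (r ^ p) * V ^ (p / n) + A ^ (p / n) := by
  have hn : (0 : ℝ) < n := hp0.trans_le hpn
  have hq0 : 0 ≤ p / n := by positivity
  calc a ^ (p / n) ≤ (ENNReal.ofReal (r ^ n) * V + A) ^ (p / n) := ENNReal.rpow_le_rpow h hq0
    _ ≤ (ENNReal.ofReal (r ^ n) * V) ^ (p / n) + A ^ (p / n) :=
        ENNReal.rpow_add_le_add_rpow _ _ hq0 (div_le_one_of_le₀ hpn hn.le)
    _ = ENNReal.ofReal (r ^ p) * V ^ (p / n) + A ^ (p / n) := by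
        rw [ENNReal.mul_rpow_of_nonneg _ _ hq0, ENNReal.ofReal_rpow_of_nonneg (by positivity) hq0,
          ← Real.rpow_natCast, ← Real.rpow_mul hr, mul_div_cancel₀ _ hn.ne']

theorem exists_rpow_lintegral_expNeg_legendre_le {n : ℕ} (hn : 0 < n) {p : ℝ} (hp0 : 0 < p)
    (hp1 : p ≤ 1) (μ : Measure (Euc n)) [IsFiniteMeasure μ]
    (hsupp : ∀ θ : Euc n, θ ≠ 0 → μ {y | inner ℝ θ y ≠ 0} ≠ 0) :
    ∃ K B : ℝ≥0, ∀ ψ : Euc n → EReal, (∀ x, ψ (-x) = ψ x) → (∀ x, 0 ≤ ψ x) → ψ 0 ≤ 0 →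
      (∫⁻ x, expNeg (legendre ψ x)) ^ (p / n) ≤ K * ∫⁻ y, (ψ y).toENNReal ^ p ∂μ + B := by
  have : Nonempty (Fin n) := ⟨⟨0, hn⟩⟩
  obtain ⟨m, hm, κ, hκ, hgrowth⟩ := exists_linear_growth_legendre μ hp0 hp1 hsupp
  set V := volume (Metric.ball (0 : Euc n) 1)
  set A := ∫⁻ x : Euc n, ENNReal.ofReal (Real.exp (-(κ * ‖x‖)))
  set q := p / n
  have hq0 : 0 < q := by positivity
  have hK : ENNReal.ofReal (2 / m) * V ^ q ≠ ⊤ :=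
    ENNReal.mul_ne_top ENNReal.ofReal_ne_top (ENNReal.rpow_ne_top_of_nonneg hq0.le
      measure_ball_lt_top.ne)
  have hB : A ^ q ≠ ⊤ := ENNReal.rpow_ne_top_of_nonneg hq0.le
    (integrable_exp_neg_mul_norm volume hκ).lintegral_lt_top.ne
  refine ⟨(ENNReal.ofReal (2 / m) * V ^ q).toNNReal, (A ^ q).toNNReal,
    fun ψ hsym hpos h0 => ?_⟩
  rw [ENNReal.coe_toNNReal hK, ENNReal.coe_toNNReal hB]
  set J := ∫⁻ y, (ψ y).toENNReal ^ p ∂μ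
  by_cases hJ : J = ⊤
  · rw [hJ, ENNReal.mul_top (mul_ne_zero (by simpa using hm)
      (ENNReal.rpow_pos (Metric.measure_ball_pos _ _ one_pos) measure_ball_lt_top.ne).ne')]
    simp
  set r := (2 * J.toReal / m) ^ p⁻¹
  have hrp : r ^ p = 2 * J.toReal / m := Real.rpow_inv_rpow (by positivity) hp0.ne'
  have hI : ∫⁻ x, expNeg (legendre ψ x) ≤ ENNReal.ofReal (r ^ n) * V + A := by
    have hball : volume (Metric.ball (0 : Euc n) r) = ENNReal.ofReal (r ^ n) * V := by
      simpa using Measure.addHaar_ball volume (0 : Euc n) (by positivity : 0 ≤ r)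
    rw [← hball]
    refine lintegral_expNeg_le_measure_ball_add volume (legendre_nonneg h0)
      fun x hx => hgrowth ψ hsym hpos h0 x ?_
    change 2 * J ≤ _
    rw [← ENNReal.ofReal_toReal hJ, ← ENNReal.ofReal_two_mul]
    apply ENNReal.ofReal_le_ofReal
    have hxp := Real.rpow_le_rpow (by positivity) hx hp0.le
    rw [hrp, div_le_iff₀ hm] at hxp
    linarith
  calc (∫⁻ x, expNeg (legendre ψ x)) ^ q ≤ ENNReal.ofReal (r ^ p) * V ^ q + A ^ q :=
        ENNReal.rpow_div_le_of_le_ofReal_pow_mul_add (by positivity) hp0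
          (hp1.trans (by exact_mod_cast hn)) hI
    _ = ENNReal.ofReal (2 / m) * V ^ q * J + A ^ q := by
        rw [hrp, mul_div_right_comm, ENNReal.ofReal_mul (by positivity),
          ENNReal.ofReal_toReal hJ]
        ring

theorem statement13_general {n : ℕ} (hn : 0 < n) (p : ℝ) (hp0 : 0 < p) (hp1 : p < 1)
    (μ : Measure (Euc n)) [IsFiniteMeasure μ]
    (hsupp : ∀ θ : Euc n, θ ≠ 0 → μ {x : Euc n | (inner ℝ θ x : ℝ) ≠ 0} ≠ 0) :
    ∃ c C : ℝ, 0 < c ∧ 0 < C ∧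
      ∀ ψ : Euc n → EReal, LowerSemicontinuous ψ → ERealConvex ψ →
        (∀ x, ψ (-x) = ψ x) → (∀ x, 0 ≤ ψ x) → ψ 0 = 0 →
        (c : EReal) * (((∫⁻ x, expNeg (legendre ψ x)) ^ (p / n) : ℝ≥0∞) : EReal)
            - (C : EReal)
          ≤ ((∫⁻ x, posPartE (ψ x) ^ p ∂μ : ℝ≥0∞) : EReal) := by
  obtain ⟨K, B, hKB⟩ := exists_rpow_lintegral_expNeg_legendre_le hn hp0 hp1.le μ hsupp
  refine ⟨((K + 1)⁻¹ : ℝ≥0), (B + 1 : ℝ≥0), by positivity, by positivity,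
    fun ψ _ _ hsym hpos h0 => ?_⟩
  rw [posPartE_eq_toENNReal]
  exact ereal_inv_mul_sub_le_of_le_mul_add (hKB ψ hsym hpos h0.le)

/-- coercivity lemma. For `μ` finite, even, and not supported on a
hyperplane, every even lsc convex `ψ ≥ 0` with `ψ(0) = 0` satisfies
`∫ ψ^p dμ ≥ c_μ (∫ e^{-ψ*})^{p/n} - C_μ`. -/
theorem statement13 {n : ℕ} (hn : 0 < n) (p : ℝ) (hp0 : 0 < p) (hp1 : p < 1)
    (μ : Measure (Euc n)) [IsFiniteMeasure μ]
    (heven : μ.map (fun x => -x) = μ)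
    (hsupp : ∀ θ : Euc n, θ ≠ 0 → μ {x : Euc n | (inner ℝ θ x : ℝ) ≠ 0} ≠ 0) :
    ∃ c C : ℝ, 0 < c ∧ 0 < C ∧
      ∀ ψ : Euc n → EReal, LowerSemicontinuous ψ → ERealConvex ψ →
        (∀ x, ψ (-x) = ψ x) → (∀ x, 0 ≤ ψ x) → ψ 0 = 0 →
        (c : EReal) * (((∫⁻ x, expNeg (legendre ψ x)) ^ (p / n) : ℝ≥0∞) : EReal)
            - (C : EReal)
          ≤ ((∫⁻ x, posPartE (ψ x) ^ p ∂μ : ℝ≥0∞) : EReal) :=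
  statement13_general hn p hp0 hp1 μ hsupp

end
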